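/- arXiv:1507.02874 — 4 statements merged into one kernel-verified Lean document; each statement's English description precedes it below -/
import Mathlib

section
/- For independent random variables X, Y, W (mutually independent) and any random variable Z on a finite probability space, I(X;Z|W) ≤ I(X;Z|W,Y), where I denotes conditional mutual information. -/
open Finset

/-- The probability that the random variable `X` takes the value `a`,
on a finite sample space with weight function `p`. -/
noncomputable def prb {Ω α : Type*} [Fintype Ω] [DecidableEq α]
    (p : Ω → ℝ) (X : Ω → α) (a : α) : ℝ :=
  ∑ ω ∈ Finset.univ.filter (fun ω => X ω = a), p ω

/-- Shannon entropy of a random variable `X` on a finite probability space. -/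
noncomputable def ent {Ω α : Type*} [Fintype Ω] [Fintype α] [DecidableEq α]
    (p : Ω → ℝ) (X : Ω → α) : ℝ :=
  ∑ a : α, Real.negMulLog (prb p X a)

/-- Conditional mutual information `I(X;Y|W) = H(X,W) + H(Y,W) - H(X,Y,W) - H(W)`. -/
noncomputable def cmi {Ω α β γ : Type*} [Fintype Ω] [Fintype α] [DecidableEq α]
    [Fintype β] [DecidableEq β] [Fintype γ] [DecidableEq γ]
    (p : Ω → ℝ) (X : Ω → α) (Y : Ω → β) (W : Ω → γ) : ℝ :=
  ent p (fun ω => (X ω, W ω)) + ent p (fun ω => (Y ω, W ω))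
    - ent p (fun ω => (X ω, Y ω, W ω)) - ent p W

/-!
Under the independence hypothesis `H(X,W) = H(X) + H(W)` and `H(X,W,Y) = H(X) + H(W,Y)`, so
`I(X;Z|W,Y) - I(X;Z|W) = I(X;Y|Z,W)`, and it remains to show that conditional mutual information
is nonnegative. Writing `I(A;B|C)` as `∑ q(a,b,c) log (q(a,b,c) q(c) / (q(a,c) q(b,c)))` and
bounding each logarithm by `log t ≥ 1 - 1/t` leaves `∑ q(a,b,c) - ∑ q(a,c) q(b,c) / q(c)`, and
both sums equal the total mass.
-/

open Real

lemma sub_mul_div_le_mul_log {x u v w : ℝ} (hx : 0 ≤ x) (hxu : x ≤ u) (hxv : x ≤ v)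
    (hxw : x ≤ w) : x - u * v / w ≤ x * (log x + log w - log u - log v) := by
  rcases hx.eq_or_lt with rfl | hx
  · simpa using div_nonneg (mul_nonneg hxu hxv) hxw
  have hu : 0 < u := hx.trans_le hxu
  have hv : 0 < v := hx.trans_le hxv
  have hw : 0 < w := hx.trans_le hxw
  have hlog := one_sub_inv_le_log_of_pos (show 0 < x * w / (u * v) by positivity)
  rw [log_div (by positivity) (by positivity), log_mul hx.ne' hw.ne', log_mul hu.ne' hv.ne']
    at hlog
  calc x - u * v / w = x * (1 - (x * w / (u * v))⁻¹) := by field_simp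
    _ ≤ x * (log x + log w - (log u + log v)) := by gcongr
    _ = x * (log x + log w - log u - log v) := by ring

lemma sum_mul_div_eq_sum {A B C : Type*} [Fintype A] [Fintype B] [Fintype C]
    (f : A → C → ℝ) (g : B → C → ℝ) (h : C → ℝ) (hf : ∀ c, ∑ a, f a c = h c)
    (hg : ∀ c, ∑ b, g b c = h c) :
    ∑ k : A × B × C, f k.1 k.2.2 * g k.2.1 k.2.2 / h k.2.2 = ∑ c, h c :=
  calc ∑ k : A × B × C, f k.1 k.2.2 * g k.2.1 k.2.2 / h k.2.2
      = ∑ a, ∑ c, ∑ b, f a c * g b c / h c := by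
        simp only [Fintype.sum_prod_type]
        exact Finset.sum_congr rfl fun a _ => Finset.sum_comm
    _ = ∑ c, (∑ a, f a c) * (∑ b, g b c) / h c := by
        rw [Finset.sum_comm]
        refine Finset.sum_congr rfl fun c _ => ?_
        rw [Finset.sum_mul, Finset.sum_div]
        refine Finset.sum_congr rfl fun a _ => ?_
        rw [Finset.mul_sum, Finset.sum_div]
    _ = ∑ c, h c := by simp only [hf, hg, mul_self_div_self] -- also where `h c = 0`: `0 / 0 = 0`

section

variable {Ω : Type*} [Fintype Ω] (p : Ω → ℝ)

lemma sum_prb {α : Type*} [Fintype α] [DecidableEq α] (X : Ω → α) :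
    ∑ a, prb p X a = ∑ ω, p ω :=
  Finset.sum_fiberwise univ X p

lemma sum_mul_comp_eq_sum_prb_mul {κ : Type*} [Fintype κ] [DecidableEq κ] (V : Ω → κ)
    (f : κ → ℝ) : ∑ ω, p ω * f (V ω) = ∑ k, prb p V k * f k := by
  rw [← Finset.sum_fiberwise univ V]
  refine Finset.sum_congr rfl fun k _ => ?_
  rw [prb, Finset.sum_mul]
  exact Finset.sum_congr rfl fun ω hω => by rw [(Finset.mem_filter.mp hω).2]

lemma ent_eq_neg_sum {α : Type*} [Fintype α] [DecidableEq α] (X : Ω → α) :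
    ent p X = -∑ ω, p ω * log (prb p X (X ω)) := by
  rw [sum_mul_comp_eq_sum_prb_mul p X fun a => log (prb p X a), ent, ← Finset.sum_neg_distrib]
  simp only [negMulLog, neg_mul]

lemma ent_comp_eq_neg_sum {κ κ' : Type*} [Fintype κ] [DecidableEq κ] [Fintype κ']
    [DecidableEq κ'] (g : κ → κ') (V : Ω → κ) :
    ent p (fun ω => g (V ω)) = -∑ k, prb p V k * log (prb p (fun ω => g (V ω)) (g k)) := by
  rw [ent_eq_neg_sum, sum_mul_comp_eq_sum_prb_mul p V fun k => log (prb p _ (g k))]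

lemma prb_le_prb_comp (hp0 : ∀ ω, 0 ≤ p ω) {κ κ' : Type*} [DecidableEq κ] [DecidableEq κ']
    (g : κ → κ') (V : Ω → κ) (k : κ) : prb p V k ≤ prb p (fun ω => g (V ω)) (g k) :=
  Finset.sum_le_sum_of_subset_of_nonneg
    (Finset.monotone_filter_right _ fun ω _ (h : V ω = k) => congrArg g h)
    fun ω _ _ => hp0 ω

lemma prb_comp_of_injective {κ κ' : Type*} [DecidableEq κ] [DecidableEq κ'] {g : κ → κ'}
    (hg : g.Injective) (V : Ω → κ) (k : κ) : prb p (fun ω => g (V ω)) (g k) = prb p V k := by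
  simp only [prb, hg.eq_iff]

lemma ent_comp_of_injective {κ κ' : Type*} [Fintype κ] [DecidableEq κ] [Fintype κ']
    [DecidableEq κ'] {g : κ → κ'} (hg : g.Injective) (V : Ω → κ) :
    ent p (fun ω => g (V ω)) = ent p V := by
  rw [ent_comp_eq_neg_sum]
  simp only [prb_comp_of_injective p hg, ent, negMulLog, neg_mul, Finset.sum_neg_distrib]

lemma sum_prb_pair_left {α κ : Type*} [Fintype α] [DecidableEq α] [DecidableEq κ]
    (X : Ω → α) (V : Ω → κ) (k : κ) :
    ∑ a, prb p (fun ω => (X ω, V ω)) (a, k) = prb p V k := by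
  rw [prb, ← Finset.sum_fiberwise (univ.filter fun ω => V ω = k) X p]
  refine Finset.sum_congr rfl fun a _ => ?_
  rw [prb, Finset.filter_filter]
  simp only [Prod.ext_iff, and_comm]

lemma cmi_nonneg {α β γ : Type*} [Fintype α] [DecidableEq α] [Fintype β] [DecidableEq β]
    [Fintype γ] [DecidableEq γ] (hp0 : ∀ ω, 0 ≤ p ω) (X : Ω → α) (Y : Ω → β) (W : Ω → γ) :
    0 ≤ cmi p X Y W := by
  let V : Ω → α × β × γ := fun ω => (X ω, Y ω, W ω)
  have hABC : ent p V = -∑ k, prb p V k * log (prb p V k) := by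
    simp only [ent, negMulLog, neg_mul, Finset.sum_neg_distrib]
  have hAC := ent_comp_eq_neg_sum p (fun k : α × β × γ => (k.1, k.2.2)) V
  have hBC := ent_comp_eq_neg_sum p (fun k : α × β × γ => (k.2.1, k.2.2)) V
  have hC := ent_comp_eq_neg_sum p (fun k : α × β × γ => k.2.2) V
  calc 0 = ∑ k, (prb p V k - prb p (fun ω => (X ω, W ω)) (k.1, k.2.2)
        * prb p (fun ω => (Y ω, W ω)) (k.2.1, k.2.2) / prb p W k.2.2) := by
        rw [Finset.sum_sub_distrib, sum_mul_div_eq_sum _ _ _ (sum_prb_pair_left p X W)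
          (sum_prb_pair_left p Y W), sum_prb, sum_prb, sub_self]
    _ ≤ ∑ k, prb p V k * (log (prb p V k) + log (prb p W k.2.2)
        - log (prb p (fun ω => (X ω, W ω)) (k.1, k.2.2))
        - log (prb p (fun ω => (Y ω, W ω)) (k.2.1, k.2.2))) :=
      Finset.sum_le_sum fun k _ => sub_mul_div_le_mul_log (Finset.sum_nonneg fun ω _ => hp0 ω)
        (prb_le_prb_comp p hp0 (fun k => (k.1, k.2.2)) V k)
        (prb_le_prb_comp p hp0 (fun k => (k.2.1, k.2.2)) V k)
        (prb_le_prb_comp p hp0 (fun k => k.2.2) V k)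
    _ = cmi p X Y W := by
      rw [cmi, hAC, hBC, hC, hABC]
      simp only [mul_add, mul_sub, Finset.sum_add_distrib, Finset.sum_sub_distrib]
      ring

lemma ent_pair_eq_add_of_prb_eq_mul {α β : Type*} [Fintype α] [DecidableEq α] [Fintype β]
    [DecidableEq β] (hp1 : ∑ ω, p ω = 1) {X : Ω → α} {Y : Ω → β}
    (h : ∀ a b, prb p (fun ω => (X ω, Y ω)) (a, b) = prb p X a * prb p Y b) :
    ent p (fun ω => (X ω, Y ω)) = ent p X + ent p Y := by
  have hX : ∑ a, prb p X a = 1 := (sum_prb p X).trans hp1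
  have hY : ∑ b, prb p Y b = 1 := (sum_prb p Y).trans hp1
  simp only [ent, Fintype.sum_prod_type, h, negMulLog_mul, Finset.sum_add_distrib,
    ← Finset.sum_mul, ← Finset.mul_sum, hX, hY, one_mul]

lemma prb_fst_thd_eq_mul_of_indep {α β γ : Type*} [DecidableEq α] [Fintype β] [DecidableEq β]
    [DecidableEq γ] (hp1 : ∑ ω, p ω = 1) {X : Ω → α} {Y : Ω → β} {W : Ω → γ}
    (hindep : ∀ a b c, prb p (fun ω => (X ω, Y ω, W ω)) (a, b, c)
      = prb p X a * prb p Y b * prb p W c) (a : α) (c : γ) :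
    prb p (fun ω => (X ω, W ω)) (a, c) = prb p X a * prb p W c := by
  have hperm : ∀ b, prb p (fun ω => (Y ω, X ω, W ω)) (b, a, c)
      = prb p (fun ω => (X ω, Y ω, W ω)) (a, b, c) := fun b =>
    prb_comp_of_injective p (g := fun k : α × β × γ => (k.2.1, k.1, k.2.2))
      (fun s t h => by simp_all [Prod.ext_iff]) (fun ω => (X ω, Y ω, W ω)) (a, b, c)
  rw [← sum_prb_pair_left p Y, Finset.sum_congr rfl fun b _ => (hperm b).trans (hindep a b c),
    ← Finset.sum_mul, ← Finset.mul_sum, (sum_prb p Y).trans hp1, mul_one]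

lemma prb_fst_thd_snd_eq_mul_of_indep {α β γ : Type*} [Fintype α] [DecidableEq α]
    [DecidableEq β] [DecidableEq γ] (hp1 : ∑ ω, p ω = 1) {X : Ω → α} {Y : Ω → β} {W : Ω → γ}
    (hindep : ∀ a b c, prb p (fun ω => (X ω, Y ω, W ω)) (a, b, c)
      = prb p X a * prb p Y b * prb p W c) (a : α) (c : γ) (b : β) :
    prb p (fun ω => (X ω, W ω, Y ω)) (a, c, b)
      = prb p X a * prb p (fun ω => (W ω, Y ω)) (c, b) := by
  have hperm : ∀ a, prb p (fun ω => (X ω, W ω, Y ω)) (a, c, b)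
      = prb p X a * prb p Y b * prb p W c := fun a =>
    (prb_comp_of_injective p (g := fun k : α × β × γ => (k.1, k.2.2, k.2.1))
      (fun s t h => by simp_all [Prod.ext_iff]) (fun ω => (X ω, Y ω, W ω)) (a, b, c)).trans
      (hindep a b c)
  have hWY : prb p (fun ω => (W ω, Y ω)) (c, b) = prb p Y b * prb p W c := by
    rw [← sum_prb_pair_left p X, Finset.sum_congr rfl fun a _ => hperm a, ← Finset.sum_mul,
      ← Finset.sum_mul, (sum_prb p X).trans hp1, one_mul]
  rw [hperm, hWY, mul_assoc]

end

/-- For mutually independent random variables `X, Y, W` and any random variable `Z`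
on a finite probability space, `I(X;Z|W) ≤ I(X;Z|W,Y)`. -/
theorem cmi_le_cmi_of_indep {Ω α β γ δ : Type*} [Fintype Ω]
    [Fintype α] [DecidableEq α] [Fintype β] [DecidableEq β]
    [Fintype γ] [DecidableEq γ] [Fintype δ] [DecidableEq δ]
    (p : Ω → ℝ) (hp0 : ∀ ω, 0 ≤ p ω) (hp1 : ∑ ω : Ω, p ω = 1)
    (X : Ω → α) (Y : Ω → β) (W : Ω → γ) (Z : Ω → δ)
    (hindep : ∀ (a : α) (b : β) (c : γ),
      prb p (fun ω => (X ω, Y ω, W ω)) (a, b, c) = prb p X a * prb p Y b * prb p W c) :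
    cmi p X Z W ≤ cmi p X Z (fun ω => (W ω, Y ω)) := by
  have hXW : ent p (fun ω => (X ω, W ω)) = ent p X + ent p W :=
    ent_pair_eq_add_of_prb_eq_mul p hp1 (prb_fst_thd_eq_mul_of_indep p hp1 hindep)
  have hXWY : ent p (fun ω => (X ω, W ω, Y ω)) = ent p X + ent p (fun ω => (W ω, Y ω)) :=
    ent_pair_eq_add_of_prb_eq_mul p hp1 fun a x =>
      prb_fst_thd_snd_eq_mul_of_indep p hp1 hindep a x.1 x.2
  have hZWY : ent p (fun ω => (Z ω, W ω, Y ω)) = ent p (fun ω => (Y ω, Z ω, W ω)) :=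
    ent_comp_of_injective p (g := fun k : β × δ × γ => (k.2.1, k.2.2, k.1))
      (fun s t h => by simp_all [Prod.ext_iff]) fun ω => (Y ω, Z ω, W ω)
  have hXZWY : ent p (fun ω => (X ω, Z ω, W ω, Y ω)) = ent p (fun ω => (X ω, Y ω, Z ω, W ω)) :=
    ent_comp_of_injective p (g := fun k : α × β × δ × γ => (k.1, k.2.2.1, k.2.2.2, k.2.1))
      (fun s t h => by simp_all [Prod.ext_iff]) fun ω => (X ω, Y ω, Z ω, W ω)
  have hXY_ZW := cmi_nonneg p hp0 X Y fun ω => (Z ω, W ω)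
  simp only [cmi] at hXY_ZW ⊢
  linarith
end

section
/- Let X_1,…,X_m be jointly distributed random variables and for a partition P of M = {1,…,m} with |P| ≥ 2 define Δ(P) = (1/(|P|−1))·(∑_{A ∈ P} H(X_A) − H(X_M)). Let S be the singleton partition. Then for any partition P with |P| ≥ 2, the identity ∑_{A ∈ P} |A^c|·Δ(P_{A^c}) = (|P|−1)·(Δ(P) + (m−1)·Δ(S)) holds, where for a nonempty set C ⊊ M, P_C is the partition consisting of C^c together with the singletons of elements of C (and P_C = S when |C| = m−1). -/
/-!
The identity is linear bookkeeping in the entropies, with no information theory in it: once the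
normalising factors `1/(|P|-1)`, `1/(m-1)`, `1/|Aᶜ|` are cleared, the left side is
`∑_A H(X_A) + ∑_A ∑_{b ∉ A} H(X_b) - |P| H(X_M)`, and the double sum equals `(|P|-1) ∑_b H(X_b)`
because each `b` lies outside exactly `|P|-1` cells of `P`.
-/

open Finset

/-- Joint Shannon entropy `H(X_A)` of the collection `(X_i : i ∈ A)`. -/
noncomputable def entS {Ω ι α : Type*} [Fintype Ω] [DecidableEq ι]
    [Fintype α] [DecidableEq α] (p : Ω → ℝ) (X : ι → Ω → α) (A : Finset ι) : ℝ :=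
  ent p (fun ω => fun i : A => X i.1 ω)

/-- `Δ(P) = (1/(|P|−1)) (∑_{A ∈ P} H(X_A) − H(X_M))` for a partition `P` of `M`. -/
noncomputable def dPart {Ω α : Type*} {m : ℕ} [Fintype Ω] [Fintype α] [DecidableEq α]
    (p : Ω → ℝ) (X : Fin m → Ω → α)
    (P : Finpartition (Finset.univ : Finset (Fin m))) : ℝ :=
  (1 / ((P.parts.card : ℝ) - 1)) * (∑ A ∈ P.parts, entS p X A - entS p X Finset.univ)

/-- `Δ(S)` for the singleton partition `S`. -/
noncomputable def dS {Ω α : Type*} {m : ℕ} [Fintype Ω] [Fintype α] [DecidableEq α]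
    (p : Ω → ℝ) (X : Fin m → Ω → α) : ℝ :=
  (1 / ((m : ℝ) - 1)) * (∑ i : Fin m, entS p X {i} - entS p X Finset.univ)

/-- `Δ(P_B)` for the partition `P_B = {Bᶜ} ∪ {{b} : b ∈ B}` (so `|P_B| − 1 = |B|`). -/
noncomputable def dPB {Ω α : Type*} {m : ℕ} [Fintype Ω] [Fintype α] [DecidableEq α]
    (p : Ω → ℝ) (X : Fin m → Ω → α) (B : Finset (Fin m)) : ℝ :=
  (1 / (B.card : ℝ)) *
    (entS p X Bᶜ + ∑ b ∈ B, entS p X {b} - entS p X Finset.univ)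

namespace Finpartition

variable {ι : Type*} [DecidableEq ι]

theorem ne_of_mem_parts_of_two_le_card {s t : Finset ι} {P : Finpartition s}
    (hP : 2 ≤ #P.parts) (ht : t ∈ P.parts) : t ≠ s := by
  rintro rfl
  have hsub : P.parts ⊆ {t} := fun u hu => by
    obtain ⟨a, ha⟩ := P.nonempty_of_mem_parts hu
    exact mem_singleton.2 (P.eq_of_mem_parts hu ht ha (P.le hu ha))
  have := card_le_card hsub
  rw [card_singleton] at this
  omega

theorem sum_sum_parts {M : Type*} [AddCommMonoid M] {s : Finset ι} (P : Finpartition s)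
    (f : ι → M) : ∑ A ∈ P.parts, ∑ i ∈ A, f i = ∑ i ∈ s, f i := by
  conv_rhs => rw [← P.biUnion_parts]
  exact (sum_biUnion P.supIndep.pairwiseDisjoint).symm

theorem sum_sum_compl_parts [Fintype ι] {M : Type*} [AddCommGroup M]
    (P : Finpartition (univ : Finset ι)) (f : ι → M) :
    ∑ A ∈ P.parts, ∑ i ∈ Aᶜ, f i = #P.parts • ∑ i, f i - ∑ i, f i := by
  have hcompl : ∀ A : Finset ι, ∑ i ∈ Aᶜ, f i = ∑ i, f i - ∑ i ∈ A, f i :=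
    fun A => eq_sub_of_add_eq (sum_compl_add_sum A f)
  simp only [hcompl, sum_sub_distrib, sum_const, P.sum_sum_parts]

end Finpartition

section Delta

variable {Ω α : Type*} [Fintype Ω] [Fintype α] [DecidableEq α] {m : ℕ}
  (p : Ω → ℝ) (X : Fin m → Ω → α)

theorem card_mul_dPB {B : Finset (Fin m)} (hB : B.Nonempty) :
    (#B : ℝ) * dPB p X B = entS p X Bᶜ + ∑ b ∈ B, entS p X {b} - entS p X univ := by
  rw [dPB, ← mul_assoc, mul_one_div_cancel (Nat.cast_ne_zero.2 hB.card_pos.ne'), one_mul]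

theorem card_parts_sub_one_mul_dPart (P : Finpartition (univ : Finset (Fin m)))
    (hP : #P.parts ≠ 1) :
    ((#P.parts : ℝ) - 1) * dPart p X P = ∑ A ∈ P.parts, entS p X A - entS p X univ := by
  have hP' : (#P.parts : ℝ) - 1 ≠ 0 := sub_ne_zero.2 (by exact_mod_cast hP)
  rw [dPart, ← mul_assoc, mul_one_div_cancel hP', one_mul]

theorem sub_one_mul_dS (hm : m ≠ 1) :
    ((m : ℝ) - 1) * dS p X = ∑ i, entS p X {i} - entS p X univ := by
  have hm' : (m : ℝ) - 1 ≠ 0 := sub_ne_zero.2 (by exact_mod_cast hm)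
  rw [dS, ← mul_assoc, mul_one_div_cancel hm', one_mul]

end Delta

theorem sum_compl_delta_identity_general {Ω α : Type*} [Fintype Ω] [Fintype α] [DecidableEq α]
    {m : ℕ} (hm : 2 ≤ m) (p : Ω → ℝ)
    (X : Fin m → Ω → α)
    (P : Finpartition (Finset.univ : Finset (Fin m))) (hP : 2 ≤ P.parts.card) :
    ∑ A ∈ P.parts, ((Aᶜ : Finset (Fin m)).card : ℝ) * dPB p X Aᶜ
      = ((P.parts.card : ℝ) - 1) * (dPart p X P + ((m : ℝ) - 1) * dS p X) := by
  have hcell : ∀ A ∈ P.parts, ((Aᶜ : Finset (Fin m)).card : ℝ) * dPB p X Aᶜ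
      = entS p X A + ∑ b ∈ Aᶜ, entS p X {b} - entS p X univ := fun A hA => by
    have hAc : (Aᶜ : Finset (Fin m)).Nonempty :=
      (compl_ne_univ_iff_nonempty _).1 (by
        rw [compl_compl]; exact Finpartition.ne_of_mem_parts_of_two_le_card hP hA)
    rw [card_mul_dPB p X hAc, compl_compl]
  rw [sum_congr rfl hcell, sum_sub_distrib, sum_add_distrib, P.sum_sum_compl_parts, mul_add,
    card_parts_sub_one_mul_dPart p X P (by omega), sub_one_mul_dS p X (by omega)]
  simp only [sum_const, nsmul_eq_mul]
  ring

/-- The identity `∑_{A ∈ P} |Aᶜ|·Δ(P_{Aᶜ}) = (|P|−1)·(Δ(P) + (m−1)·Δ(S))` for any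
partition `P` of `M = {1,…,m}` with at least two cells. -/
theorem sum_compl_delta_identity {Ω α : Type*} [Fintype Ω] [Fintype α] [DecidableEq α]
    {m : ℕ} (hm : 2 ≤ m) (p : Ω → ℝ) (hp0 : ∀ ω, 0 ≤ p ω) (hp1 : ∑ ω : Ω, p ω = 1)
    (X : Fin m → Ω → α)
    (P : Finpartition (Finset.univ : Finset (Fin m))) (hP : 2 ≤ P.parts.card) :
    ∑ A ∈ P.parts, ((Aᶜ : Finset (Fin m)).card : ℝ) * dPB p X Aᶜ
      = ((P.parts.card : ℝ) - 1) * (dPart p X P + ((m : ℝ) - 1) * dS p X) :=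
  sum_compl_delta_identity_general hm p X P hP
end

section
/- Let m ≥ 3 and X_1,…,X_m be jointly distributed random variables such that the singleton partition S is the unique minimizer of Δ(P) over all partitions P of M with |P| ≥ 2. Then for every T ⊂ M with |T| = m−1, Δ_T(S) < Δ(S), where Δ_T(S) = (1/(m−2))·(∑_{i ∈ T} H(X_i) − H(X_T)). -/
open Finset

/-! Write `Tᶜ = {j}`. Minimality of the singleton partition `S` against the two-block partition
`{T, {j}}` gives `Δ(S) < H(X_T) + H(X_j) − H(X_M) = (m−1)·Δ(S) − (m−2)·Δ_T(S)`, because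
`∑ᵢ H(X_i) = ∑_{i∈T} H(X_i) + H(X_j)`; rearranging gives `Δ_T(S) < Δ(S)`. -/

namespace Finpartition

variable {ι : Type*} [Fintype ι] [DecidableEq ι] {s : Finset ι}

def ofCompl (hs : s ≠ ∅) (hsc : sᶜ ≠ ∅) : Finpartition (univ : Finset ι) :=
  (indiscrete hs).extend hsc disjoint_compl_right s.union_compl

theorem parts_ofCompl (hs : s ≠ ∅) (hsc : sᶜ ≠ ∅) : (ofCompl hs hsc).parts = {sᶜ, s} := rfl

theorem card_parts_ofCompl (hs : s ≠ ∅) (hsc : sᶜ ≠ ∅) : #(ofCompl hs hsc).parts = 2 :=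
  card_extend _ _ _

theorem parts_ofCompl_ne_image_singleton (hs : s ≠ ∅) (hsc : sᶜ ≠ ∅) (hι : Fintype.card ι ≠ 2) :
    (ofCompl hs hsc).parts ≠ univ.image ({·}) := by
  intro h
  have := congrArg card h
  rw [card_parts_ofCompl, card_image_of_injective _ singleton_injective, card_univ] at this
  exact hι this.symm

end Finpartition

theorem dPart_ofCompl {Ω α : Type*} {m : ℕ} [Fintype Ω] [Fintype α] [DecidableEq α]
    (p : Ω → ℝ) (X : Fin m → Ω → α) {s : Finset (Fin m)} (hs : s ≠ ∅) (hsc : sᶜ ≠ ∅) :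
    dPart p X (.ofCompl hs hsc) = entS p X s + entS p X sᶜ - entS p X univ := by
  have hne : sᶜ ≠ s := fun h =>
    hs (disjoint_self.1 (by simpa only [h] using disjoint_compl_right (a := s)))
  rw [dPart, Finpartition.card_parts_ofCompl, Finpartition.parts_ofCompl, sum_pair hne]
  norm_num [add_comm]

theorem div_sub_two_lt_of_div_sub_one_lt {m D c : ℝ} (hm : 2 < m) (h : 1 / (m - 1) * D < D - c) :
    1 / (m - 2) * c < 1 / (m - 1) * D := by
  have h1 : 0 < m - 1 := by linarith
  have h2 : 0 < m - 2 := by linarith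
  rw [one_div_mul_eq_div, one_div_mul_eq_div, div_lt_div_iff₀ h2 h1]
  rw [one_div_mul_eq_div, div_lt_iff₀ h1] at h
  nlinarith

theorem deltaT_lt_deltaS_of_unique_min_general {Ω α : Type*} [Fintype Ω] [Fintype α] [DecidableEq α]
    {m : ℕ} (hm : 3 ≤ m) (p : Ω → ℝ)
    (X : Fin m → Ω → α)
    (hmin : ∀ P : Finpartition (Finset.univ : Finset (Fin m)), 2 ≤ P.parts.card →
      P.parts ≠ Finset.univ.image (fun i : Fin m => ({i} : Finset (Fin m))) →
      dS p X < dPart p X P) :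
    ∀ T : Finset (Fin m), T ⊂ Finset.univ → T.card = m - 1 →
      (1 / ((m : ℝ) - 2)) * (∑ i ∈ T, entS p X {i} - entS p X T) < dS p X := by
  intro T _ hTcard
  obtain ⟨j, hj⟩ : ∃ j, Tᶜ = {j} := card_eq_one.mp <| by
    rw [card_compl, hTcard, Fintype.card_fin]; omega
  have hT : T ≠ ∅ := fun h => by simp [h] at hTcard; omega
  have hTc : Tᶜ ≠ ∅ := by simp [hj]
  have hlt := hmin (.ofCompl hT hTc) (Finpartition.card_parts_ofCompl hT hTc).ge
    (Finpartition.parts_ofCompl_ne_image_singleton hT hTc (by rw [Fintype.card_fin]; omega))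
  have hsplit : ∑ i, entS p X {i} = ∑ i ∈ T, entS p X {i} + entS p X Tᶜ := by
    rw [← sum_add_sum_compl T, hj, sum_singleton]
  rw [dS, hsplit] at hlt ⊢
  rw [dPart_ofCompl] at hlt
  refine div_sub_two_lt_of_div_sub_one_lt (by exact_mod_cast hm) (hlt.trans_eq ?_)
  ring

/-- If the singleton partition `S` is the unique minimizer of `Δ` over partitions with at
least 2 cells, then `Δ_T(S) < Δ(S)` for every `T ⊂ M` with `|T| = m−1`. -/
theorem deltaT_lt_deltaS_of_unique_min {Ω α : Type*} [Fintype Ω] [Fintype α] [DecidableEq α]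
    {m : ℕ} (hm : 3 ≤ m) (p : Ω → ℝ) (hp0 : ∀ ω, 0 ≤ p ω) (hp1 : ∑ ω : Ω, p ω = 1)
    (X : Fin m → Ω → α)
    (hmin : ∀ P : Finpartition (Finset.univ : Finset (Fin m)), 2 ≤ P.parts.card →
      P.parts ≠ Finset.univ.image (fun i : Fin m => ({i} : Finset (Fin m))) →
      dS p X < dPart p X P) :
    ∀ T : Finset (Fin m), T ⊂ Finset.univ → T.card = m - 1 →
      (1 / ((m : ℝ) - 2)) * (∑ i ∈ T, entS p X {i} - entS p X T) < dS p X :=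
  deltaT_lt_deltaS_of_unique_min_general hm p X hmin
end

section
/- For integers m > t ≥ 2 and any integer b with t ≤ b ≤ m−2, the inequality C(m−1,t−1) − (1/b)·C(b,t) − ((t−1)/(m−1))·C(m,t) = (1/t)·(C(m−2,t−1) − C(b−1,t−1)) > 0 holds, where C(n,k) denotes the binomial coefficient. -/
/-! The absorption identity `n·C(n−1,k−1) = k·C(n,k)` turns `(1/b)·C(b,t)` into `C(b−1,t−1)/t`,
and together with `(m−1)·C(m−2,t−1) = (m−t)·C(m−1,t−1)` it turns
`C(m−1,t−1) − ((t−1)/(m−1))·C(m,t)` into `C(m−2,t−1)/t`. Positivity is the strict monotonicity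
of `n ↦ C(n,t−1)` on `n ≥ t−1`, as `b−1 < m−2`. -/

theorem Nat.choose_lt_choose_of_lt {n N k : ℕ} (hk : k ≠ 0) (hkN : k ≤ N) (hnN : n < N) :
    n.choose k < N.choose k := by
  obtain ⟨N, rfl⟩ : ∃ N', N = N' + 1 := ⟨N - 1, by omega⟩
  obtain ⟨k, rfl⟩ : ∃ k', k = k' + 1 := ⟨k - 1, by omega⟩
  calc n.choose (k + 1) ≤ N.choose (k + 1) := Nat.choose_le_choose _ (by omega)
    _ < N.choose k + N.choose (k + 1) := Nat.lt_add_of_pos_left (Nat.choose_pos (by omega))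
    _ = (N + 1).choose (k + 1) := (Nat.choose_succ_succ N k).symm

theorem Nat.mul_choose_sub_one_eq {n k : ℕ} (hn : n ≠ 0) (hk : k ≠ 0) :
    n * (n - 1).choose (k - 1) = n.choose k * k := by
  simpa [Nat.sub_add_cancel (Nat.one_le_iff_ne_zero.2 hn),
    Nat.sub_add_cancel (Nat.one_le_iff_ne_zero.2 hk)] using Nat.add_one_mul_choose_eq (n - 1) (k - 1)

section CharZero

variable {K : Type*} [Field K] [CharZero K]

theorem one_div_mul_cast_choose {n k : ℕ} (hn : n ≠ 0) (hk : k ≠ 0) :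
    (1 / (n : K)) * n.choose k = (n - 1).choose (k - 1) / k := by
  have h : (n : K) * (n - 1).choose (k - 1) = n.choose k * k := by
    exact_mod_cast Nat.mul_choose_sub_one_eq hn hk
  field_simp
  linear_combination -h

theorem cast_choose_sub_mul_cast_choose {m k : ℕ} (hk : k ≠ 0) (hkm : k ≤ m) (hm : 2 ≤ m) :
    ((m - 1).choose (k - 1) : K) - ((k : K) - 1) / ((m : K) - 1) * m.choose k
      = (m - 2).choose (k - 1) / k := by
  have hmul : (m : K) * (m - 1).choose (k - 1) = m.choose k * k := by
    exact_mod_cast Nat.mul_choose_sub_one_eq (by omega) hk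
  have hsucc : ((m - 2).choose (k - 1) : K) * ((m : K) - 1)
      = (m - 1).choose (k - 1) * ((m : K) - k) := by
    have h := Nat.choose_mul_succ_eq (m - 2) (k - 1)
    rw [show m - 2 + 1 = m - 1 by omega, show m - 1 - (k - 1) = m - k by omega] at h
    rw [← Nat.cast_pred (by omega), ← Nat.cast_sub hkm]
    exact_mod_cast h
  have hm1 : (m : K) - 1 ≠ 0 := by
    rw [← Nat.cast_pred (by omega)]
    exact_mod_cast (by omega : m - 1 ≠ 0)
  field_simp
  linear_combination (k - 1 : K) * hmul - hsucc

end CharZero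

/-- For integers `m > t ≥ 2` and `t ≤ b ≤ m−2`,
`C(m−1,t−1) − (1/b)·C(b,t) − ((t−1)/(m−1))·C(m,t) = (1/t)·(C(m−2,t−1) − C(b−1,t−1)) > 0`. -/
theorem choose_identity_pos (m t b : ℕ) (ht : 2 ≤ t) (htm : t < m)
    (hb1 : t ≤ b) (hb2 : b ≤ m - 2) :
    (((m - 1).choose (t - 1) : ℚ) - (1 / (b : ℚ)) * (b.choose t : ℚ)
        - (((t : ℚ) - 1) / ((m : ℚ) - 1)) * (m.choose t : ℚ)
      = (1 / (t : ℚ)) * (((m - 2).choose (t - 1) : ℚ) - ((b - 1).choose (t - 1) : ℚ)))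
    ∧ 0 < (1 / (t : ℚ)) * (((m - 2).choose (t - 1) : ℚ) - ((b - 1).choose (t - 1) : ℚ)) := by
  have hlt : (b - 1).choose (t - 1) < (m - 2).choose (t - 1) :=
    Nat.choose_lt_choose_of_lt (by omega) (by omega) (by omega)
  refine ⟨?_, ?_⟩
  · rw [sub_right_comm, cast_choose_sub_mul_cast_choose (by omega) htm.le (by omega),
      one_div_mul_cast_choose (by omega) (by omega)]
    ring
  · have ht0 : (0 : ℚ) < t := by exact_mod_cast (by omega : 0 < t)
    exact mul_pos (one_div_pos.2 ht0) (sub_pos.2 (by exact_mod_cast hlt))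
end
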